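/- arXiv:2402.02776 — 3 statements merged into one kernel-verified Lean document; each statement's English description precedes it below -/
import Mathlib

section
/- Let δ ≥ 1 be a real number and w ∈ C¹([0,1]) with w(0)=0. Then max_{x∈[0,1]} |w(x)| ≤ (δ+2)^{1/(δ+2)} · ‖w‖_{L^{2(δ+1)}}^{(δ+1)/(δ+2)} · ‖w'‖_{L²}^{1/(δ+2)}. -/
open MeasureTheory Set Real

/-!
With `p = δ + 2 > 1` the map `t ↦ |t| ^ p` is `C¹` with derivative `p |t| ^ (p - 2) t`, so
`|w x| ^ p = ∫₀ˣ (|w| ^ p)' ≤ p ∫₀¹ |w| ^ (p - 1) |w'|`, and Cauchy–Schwarz bounds the last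
integral by `‖w‖_{L^{2(p-1)}} ^ (p - 1) ‖w'‖_{L²}`. Taking `p`-th roots gives the claim.
-/

theorem intervalIntegral_mul_le_L2_mul_L2_of_nonneg {a b : ℝ} {f g : ℝ → ℝ} (hab : a ≤ b)
    (hf : ContinuousOn f (Icc a b)) (hg : ContinuousOn g (Icc a b))
    (hf₀ : ∀ x ∈ Icc a b, 0 ≤ f x) (hg₀ : ∀ x ∈ Icc a b, 0 ≤ g x) :
    ∫ x in a..b, f x * g x ≤
      (∫ x in a..b, f x ^ 2) ^ (1 / 2 : ℝ) * (∫ x in a..b, g x ^ 2) ^ (1 / 2 : ℝ) := by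
  have memLp_two {h : ℝ → ℝ} (hh : ContinuousOn h (Icc a b)) :
      MemLp h (ENNReal.ofReal 2) (volume.restrict (Ioc a b)) := by
    have hh' := hh.mono Ioc_subset_Icc_self
    rw [ENNReal.ofReal_ofNat,
      memLp_two_iff_integrable_sq (hh'.aestronglyMeasurable measurableSet_Ioc)]
    exact ((hh.pow 2).integrableOn_Icc).mono_set Ioc_subset_Icc_self
  have nonneg {h : ℝ → ℝ} (hh₀ : ∀ x ∈ Icc a b, 0 ≤ h x) : 0 ≤ᵐ[volume.restrict (Ioc a b)] h :=
    (ae_restrict_iff' measurableSet_Ioc).2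
      (.of_forall fun x hx => hh₀ x (Ioc_subset_Icc_self hx))
  simp only [intervalIntegral.integral_of_le hab, ← rpow_two]
  exact integral_mul_le_Lp_mul_Lq_of_nonneg .two_two (nonneg hf₀) (nonneg hg₀)
    (memLp_two hf) (memLp_two hg)

theorem abs_rpow_le_integral_of_hasDerivAt {a b p : ℝ} {w w' : ℝ → ℝ} (hp : 1 < p) (hab : a ≤ b)
    (hderiv : ∀ x ∈ Icc a b, HasDerivAt w (w' x) x) (hw' : ContinuousOn w' (Icc a b))
    (ha : w a = 0) :
    |w b| ^ p ≤ p * ∫ x in a..b, |w x| ^ (p - 1) * |w' x| := by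
  have hw : ContinuousOn w (Icc a b) := fun x hx => (hderiv x hx).continuousAt.continuousWithinAt
  have hderiv_pow : ∀ x ∈ Icc a b,
      HasDerivAt (fun y => |w y| ^ p) (p * |w x| ^ (p - 2) * w x * w' x) x := fun x hx =>
    (hasDerivAt_abs_rpow (w x) hp).comp x (hderiv x hx)
  have hbound : ∀ x, p * |w x| ^ (p - 2) * w x * w' x ≤ p * (|w x| ^ (p - 1) * |w' x|) := by
    intro x
    have hsplit : |w x| ^ (p - 1) = |w x| ^ (p - 2) * |w x| := by
      rw [show p - 1 = p - 2 + 1 by ring, rpow_add' (abs_nonneg _) (by linarith), rpow_one]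
    rw [hsplit, mul_assoc, mul_assoc, mul_assoc]
    refine mul_le_mul_of_nonneg_left (mul_le_mul_of_nonneg_left ?_ (by positivity)) (by linarith)
    rw [← abs_mul]
    exact le_abs_self _
  have hcont : ContinuousOn (fun x => p * (|w x| ^ (p - 1) * |w' x|)) (Icc a b) :=
    continuousOn_const.mul ((hw.abs.rpow_const fun _ _ => Or.inr (by linarith)).mul hw'.abs)
  -- The one-sided FTC needs integrability of the upper bound only, not of the derivative.
  have key := intervalIntegral.sub_le_integral_of_hasDeriv_right_of_le hab
    (hw.abs.rpow_const fun _ _ => Or.inr (by linarith))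
    (fun x hx => (hderiv_pow x (Ioo_subset_Icc_self hx)).hasDerivWithinAt)
    hcont.integrableOn_Icc (fun x _ => hbound x)
  rwa [ha, abs_zero, zero_rpow (by linarith), sub_zero, intervalIntegral.integral_const_mul] at key

theorem abs_rpow_le_mul_L2_mul_L2 {a b p x : ℝ} {w w' : ℝ → ℝ} (hp : 1 < p) (hx : x ∈ Icc a b)
    (hderiv : ∀ y ∈ Icc a b, HasDerivAt w (w' y) y) (hw' : ContinuousOn w' (Icc a b))
    (ha : w a = 0) :
    |w x| ^ p ≤ p * ((∫ y in a..b, |w y| ^ (2 * (p - 1))) ^ (1 / 2 : ℝ) *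
      (∫ y in a..b, w' y ^ 2) ^ (1 / 2 : ℝ)) := by
  have hw : ContinuousOn w (Icc a b) := fun y hy => (hderiv y hy).continuousAt.continuousWithinAt
  have hpow : ContinuousOn (fun y => |w y| ^ (p - 1)) (Icc a b) :=
    hw.abs.rpow_const fun _ _ => Or.inr (by linarith)
  have hsub : Icc a x ⊆ Icc a b := Icc_subset_Icc_right hx.2
  calc |w x| ^ p ≤ p * ∫ y in a..x, |w y| ^ (p - 1) * |w' y| :=
        abs_rpow_le_integral_of_hasDerivAt hp hx.1 (fun y hy => hderiv y (hsub hy))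
          (hw'.mono hsub) ha
    _ ≤ p * ∫ y in a..b, |w y| ^ (p - 1) * |w' y| := by
        gcongr
        exact intervalIntegral.integral_mono_interval le_rfl hx.1 hx.2
          (.of_forall fun y => by positivity)
          ((hpow.mul hw'.abs).intervalIntegrable_of_Icc (hx.1.trans hx.2))
    _ ≤ _ := by
        gcongr
        refine (intervalIntegral_mul_le_L2_mul_L2_of_nonneg (hx.1.trans hx.2) hpow hw'.abs
          (fun _ _ => by positivity) (fun _ _ => by positivity)).trans_eq ?_
        simp only [sq_abs, ← rpow_mul_natCast (abs_nonneg _), Nat.cast_ofNat, mul_comm (p - 1)]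

/-- Sup-norm interpolation inequality:
`max_{x∈[0,1]} |w x| ≤ (δ+2)^{1/(δ+2)} ‖w‖_{L^{2(δ+1)}}^{(δ+1)/(δ+2)} ‖w'‖_{L²}^{1/(δ+2)}`
for real `δ ≥ 1` and `w ∈ C¹([0,1])` with `w 0 = 0`. -/
theorem sup_interpolation_unit_interval (δ : ℝ) (hδ : 1 ≤ δ) (w w' : ℝ → ℝ)
    (hderiv : ∀ x ∈ Set.Icc (0 : ℝ) 1, HasDerivAt w (w' x) x)
    (hcont : ContinuousOn w' (Set.Icc (0 : ℝ) 1))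
    (h0 : w 0 = 0) :
    ∀ x ∈ Set.Icc (0 : ℝ) 1,
      |w x| ≤ (δ + 2) ^ ((1 : ℝ) / (δ + 2)) *
        ((∫ y in (0 : ℝ)..1, |w y| ^ (2 * (δ + 1))) ^ (1 / (2 * (δ + 1)))) ^ ((δ + 1) / (δ + 2)) *
        ((∫ y in (0 : ℝ)..1, (w' y) ^ 2) ^ ((1 : ℝ) / 2)) ^ ((1 : ℝ) / (δ + 2)) := by
  intro x hx
  have hbound := abs_rpow_le_mul_L2_mul_L2 (p := δ + 2) (by linarith) hx hderiv hcont h0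
  rw [show δ + 2 - 1 = δ + 1 by ring] at hbound
  set A := ∫ y in (0 : ℝ)..1, |w y| ^ (2 * (δ + 1))
  set B := ∫ y in (0 : ℝ)..1, (w' y) ^ 2
  have hA : 0 ≤ A := intervalIntegral.integral_nonneg zero_le_one fun _ _ => by positivity
  have hB : 0 ≤ B := intervalIntegral.integral_nonneg zero_le_one fun _ _ => by positivity
  have hroot : (A ^ (1 / (2 * (δ + 1)))) ^ ((δ + 1) / (δ + 2)) =
      (A ^ (1 / 2 : ℝ)) ^ (1 / (δ + 2)) := by
    rw [← rpow_mul hA, ← rpow_mul hA]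
    congr 1
    field_simp
  rw [hroot, mul_assoc, ← mul_rpow (by positivity) (by positivity),
    ← mul_rpow (by linarith) (by positivity), one_div (δ + 2),
    le_rpow_inv_iff_of_pos (abs_nonneg _) (by positivity) (by linarith)]
  exact hbound
end

section
/- Let g₁ ∈ C(ℝ) with g₁(0)=0. Then the set X = {u ∈ H²(0,1) : u(0)=0, u'(1)=−g₁(u(1))} is dense in Y = {u ∈ H¹(0,1) : u(0)=0} with respect to the H¹ norm. -/
/-!
Approximate `v'` in `L²(0,1)` by a polynomial `p` (continuous functions are dense in `L²`,
and polynomials are uniformly dense in continuous functions), and let `P` be the primitive of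
`p` vanishing at `0`; by the Poincaré inequality `∫ (v - P)² ≤ ∫ (v' - p)²`. The boundary
condition at `1` is then enforced by adding `c (1 - x) x ^ (k + 1)` with `c = p(1) + g₁(P(1))`:
this term vanishes at both ends and has slope `-1` at `1`, while it and its derivative have
squared `L²` norm at most `1 / (k + 1)`. Since `c` is fixed before `k`, a large `k` makes the
correction as cheap as we like.
-/

open MeasureTheory Set

section IntervalL2

variable {f g : ℝ → ℝ} {a b : ℝ}

lemma IntervalIntegrable.memLp_two_restrict_Ioc (hab : a ≤ b)
    (hf : IntervalIntegrable f volume a b)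
    (hf2 : IntervalIntegrable (fun x => f x ^ 2) volume a b) :
    MemLp f 2 (volume.restrict (Ioc a b)) :=
  (memLp_two_iff_integrable_sq ((intervalIntegrable_iff_integrableOn_Ioc_of_le hab).1 hf).1).2
    ((intervalIntegrable_iff_integrableOn_Ioc_of_le hab).1 hf2)

lemma ContinuousOn.memLp_two_restrict_Ioc (hab : a ≤ b) (hf : ContinuousOn f (Icc a b)) :
    MemLp f 2 (volume.restrict (Ioc a b)) :=
  (hf.intervalIntegrable_of_Icc hab).memLp_two_restrict_Ioc hab
    ((hf.pow 2).intervalIntegrable_of_Icc hab)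

namespace MeasureTheory.MemLp

lemma intervalIntegrable (hab : a ≤ b) (hf : MemLp f 2 (volume.restrict (Ioc a b))) :
    IntervalIntegrable f volume a b :=
  (intervalIntegrable_iff_integrableOn_Ioc_of_le hab).2 (hf.integrable one_le_two)

lemma intervalIntegrable_sq (hab : a ≤ b) (hf : MemLp f 2 (volume.restrict (Ioc a b))) :
    IntervalIntegrable (fun x => f x ^ 2) volume a b :=
  (intervalIntegrable_iff_integrableOn_Ioc_of_le hab).2 hf.integrable_sq

end MeasureTheory.MemLp

lemma integral_sq_sub_le (hab : a ≤ b) (hf : MemLp f 2 (volume.restrict (Ioc a b)))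
    (hg : MemLp g 2 (volume.restrict (Ioc a b))) :
    ∫ x in a..b, (f x - g x) ^ 2 ≤
      2 * (∫ x in a..b, f x ^ 2) + 2 * ∫ x in a..b, g x ^ 2 := by
  have hf2 := (hf.intervalIntegrable_sq hab).const_mul 2
  have hg2 := (hg.intervalIntegrable_sq hab).const_mul 2
  rw [← intervalIntegral.integral_const_mul, ← intervalIntegral.integral_const_mul,
    ← intervalIntegral.integral_add hf2 hg2]
  refine intervalIntegral.integral_mono_on hab ((hf.sub hg).intervalIntegrable_sq hab)
    (hf2.add hg2) fun x _ => ?_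
  nlinarith [sq_nonneg (f x + g x)]

lemma sq_integral_le_mul_integral_sq (hab : a ≤ b)
    (hf : MemLp f 2 (volume.restrict (Ioc a b))) :
    (∫ x in a..b, f x) ^ 2 ≤ (b - a) * ∫ x in a..b, f x ^ 2 := by
  rcases hab.eq_or_lt with rfl | hlt
  · simp
  have hf1 := hf.intervalIntegrable hab
  have hf2 := hf.intervalIntegrable_sq hab
  obtain ⟨m, hm⟩ : ∃ m, ∫ x in a..b, f x = m * (b - a) :=
    ⟨(∫ x in a..b, f x) / (b - a), (div_mul_cancel₀ _ (sub_pos.2 hlt).ne').symm⟩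
  -- the variance of `f` about its mean `m` is nonnegative
  have hvar : ∫ x in a..b, (f x - m) ^ 2 = (∫ x in a..b, f x ^ 2) - m ^ 2 * (b - a) := by
    have hexp : ∀ x, (f x - m) ^ 2 = f x ^ 2 - 2 * m * f x + m ^ 2 := fun x => by ring
    simp only [hexp]
    rw [intervalIntegral.integral_add (hf2.sub (hf1.const_mul _)) intervalIntegrable_const,
      intervalIntegral.integral_sub hf2 (hf1.const_mul _), intervalIntegral.integral_const_mul,
      intervalIntegral.integral_const, smul_eq_mul, hm]
    ring
  have hnonneg : 0 ≤ ∫ x in a..b, (f x - m) ^ 2 :=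
    intervalIntegral.integral_nonneg hab fun x _ => sq_nonneg _
  rw [hm]
  nlinarith [sub_pos.2 hlt]

lemma integral_sq_primitive_le (hab : a ≤ b) (hf : MemLp f 2 (volume.restrict (Ioc a b))) :
    ∫ x in a..b, (∫ t in a..x, f t) ^ 2 ≤ (b - a) ^ 2 * ∫ x in a..b, f x ^ 2 := by
  have hf2 := hf.intervalIntegrable_sq hab
  have hpointwise : ∀ x ∈ Icc a b,
      (∫ t in a..x, f t) ^ 2 ≤ (b - a) * ∫ t in a..b, f t ^ 2 := fun x hx =>
    calc (∫ t in a..x, f t) ^ 2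
        ≤ (x - a) * ∫ t in a..x, f t ^ 2 :=
          sq_integral_le_mul_integral_sq hx.1
            (hf.mono_measure (Measure.restrict_mono (Ioc_subset_Ioc_right hx.2) le_rfl))
      _ ≤ (b - a) * ∫ t in a..b, f t ^ 2 :=
          mul_le_mul (by linarith [hx.2])
            (intervalIntegral.integral_mono_interval le_rfl hx.1 hx.2
              (ae_of_all _ fun _ => sq_nonneg _) hf2)
            (intervalIntegral.integral_nonneg hx.1 fun _ _ => sq_nonneg _)
            (by linarith [hx.1, hx.2])
  have hcont : ContinuousOn (fun x => (∫ t in a..x, f t) ^ 2) (Icc a b) := by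
    have := intervalIntegral.continuousOn_primitive_interval' (hf.intervalIntegrable hab)
      (left_mem_uIcc (a := a) (b := b))
    rw [uIcc_of_le hab] at this
    exact this.pow 2
  calc ∫ x in a..b, (∫ t in a..x, f t) ^ 2
      ≤ ∫ _ in a..b, (b - a) * ∫ t in a..b, f t ^ 2 :=
        intervalIntegral.integral_mono_on hab (hcont.intervalIntegrable_of_Icc hab)
          intervalIntegrable_const hpointwise
    _ = (b - a) ^ 2 * ∫ x in a..b, f x ^ 2 := by
        rw [intervalIntegral.integral_const, smul_eq_mul]
        ring

lemma exists_polynomial_integral_sq_sub_lt (hab : a ≤ b)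
    (hf : MemLp f 2 (volume.restrict (Ioc a b))) {ε : ℝ} (hε : 0 < ε) :
    ∃ p : Polynomial ℝ, ∫ x in a..b, (f x - p.eval x) ^ 2 < ε := by
  have : (volume.restrict (Ioc a b)).Regular :=
    Measure.Regular.restrict_of_measure_ne_top (by simp)
  have hf' : MemLp f (ENNReal.ofReal 2) (volume.restrict (Ioc a b)) := by simpa using hf
  obtain ⟨g, -, hfg, hg, -⟩ :=
    hf'.exists_hasCompactSupport_integral_rpow_sub_le two_pos (ε := ε / 4) (by positivity)
  obtain ⟨η, hη, hη_lt⟩ := exists_pos_mul_lt (a := ε / 4) (by positivity) (b - a)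
  obtain ⟨p, hp⟩ :=
    exists_polynomial_near_of_continuousOn a b g hg.continuousOn √η (by positivity)
  have hg2 := hg.continuousOn.memLp_two_restrict_Ioc hab
  have hp2 : MemLp (fun x => p.eval x) 2 (volume.restrict (Ioc a b)) :=
    p.continuous.continuousOn.memLp_two_restrict_Ioc hab
  have hfg' : ∫ x in a..b, (f x - g x) ^ 2 ≤ ε / 4 := by
    simpa [intervalIntegral.integral_of_le hab, Real.norm_eq_abs, sq_abs] using hfg
  have hpg : ∫ x in a..b, (p.eval x - g x) ^ 2 ≤ (b - a) * η := by
    calc ∫ x in a..b, (p.eval x - g x) ^ 2 ≤ ∫ _ in a..b, η :=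
          intervalIntegral.integral_mono_on hab ((hp2.sub hg2).intervalIntegrable_sq hab)
            intervalIntegrable_const fun x hx => by
              simpa [sq_abs] using ((Real.lt_sqrt (abs_nonneg _)).1 (hp x hx)).le
      _ = (b - a) * η := by simp
  refine ⟨p, ?_⟩
  calc ∫ x in a..b, (f x - p.eval x) ^ 2
      = ∫ x in a..b, ((f x - g x) - (p.eval x - g x)) ^ 2 := by
        simp only [sub_sub_sub_cancel_right]
    _ ≤ 2 * (∫ x in a..b, (f x - g x) ^ 2) + 2 * ∫ x in a..b, (p.eval x - g x) ^ 2 :=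
        integral_sq_sub_le hab (hf.sub hg2) (hp2.sub hg2)
    _ < ε := by linarith

end IntervalL2

lemma contDiff_primitive {n : ℕ} {f : ℝ → ℝ} (hf : ContDiff ℝ n f) (a : ℝ) :
    ContDiff ℝ (n + 1) fun x => ∫ t in a..x, f t := by
  rw [contDiff_succ_iff_deriv]
  refine ⟨fun x => (hf.continuous.integral_hasStrictDerivAt a x).hasDerivAt.differentiableAt,
    by simp, ?_⟩
  rwa [show deriv (fun x => ∫ t in a..x, f t) = f from
    funext (Continuous.deriv_integral f hf.continuous a)]

section Corrector

/-- The paper's `φ_{k+1}(1 - x)`, where `φ_m(x) = x (1 - x) ^ m`. -/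
def corrector (k : ℕ) (x : ℝ) : ℝ := (1 - x) * x ^ (k + 1)

variable (k : ℕ)

lemma contDiff_corrector {n : WithTop ℕ∞} : ContDiff ℝ n (corrector k) := by
  unfold corrector
  fun_prop

@[simp] lemma corrector_zero : corrector k 0 = 0 := by simp [corrector]

@[simp] lemma corrector_one : corrector k 1 = 0 := by simp [corrector]

lemma hasDerivAt_corrector (x : ℝ) :
    HasDerivAt (corrector k) ((k + 1) * x ^ k - (k + 2) * x ^ (k + 1)) x := by
  have h : HasDerivAt (fun y : ℝ => (1 - y) * y ^ (k + 1))
      (-1 * x ^ (k + 1) + (1 - x) * ((k + 1 : ℕ) * x ^ k)) x :=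
    ((hasDerivAt_id x).const_sub 1).mul (hasDerivAt_pow (k + 1) x)
  exact h.congr_deriv (by push_cast; ring)

lemma deriv_corrector :
    deriv (corrector k) = fun x : ℝ => (k + 1 : ℝ) * x ^ k - (k + 2) * x ^ (k + 1) :=
  funext fun x => (hasDerivAt_corrector k x).deriv

@[simp] lemma deriv_corrector_one : deriv (corrector k) 1 = -1 := by
  norm_num [deriv_corrector]

lemma integral_pow_zero_one (n : ℕ) : ∫ x in (0 : ℝ)..1, x ^ n = 1 / (n + 1) := by
  simp [integral_pow]

lemma integral_corrector_sq_le : ∫ x in (0 : ℝ)..1, corrector k x ^ 2 ≤ 1 / (k + 1) :=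
  calc ∫ x in (0 : ℝ)..1, corrector k x ^ 2 ≤ ∫ x in (0 : ℝ)..1, x ^ (2 * k + 2) := by
        refine intervalIntegral.integral_mono_on zero_le_one
          (((contDiff_corrector k (n := 0)).continuous.pow 2).intervalIntegrable _ _)
          (intervalIntegral.intervalIntegrable_pow _) fun x hx => ?_
        have h1x : (1 - x) ^ 2 ≤ 1 := by nlinarith [hx.1, hx.2]
        calc corrector k x ^ 2 = (1 - x) ^ 2 * x ^ (2 * k + 2) := by unfold corrector; ring
          _ ≤ 1 * x ^ (2 * k + 2) := by gcongr; exact pow_nonneg hx.1 _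
          _ = x ^ (2 * k + 2) := one_mul _
    _ ≤ 1 / (k + 1) := by
        rw [integral_pow_zero_one]
        gcongr
        linarith

lemma integral_deriv_corrector_sq_le :
    ∫ x in (0 : ℝ)..1, deriv (corrector k) x ^ 2 ≤ 1 / (k + 1) := by
  have hexp : ∀ x : ℝ, ((k + 1) * x ^ k - (k + 2) * x ^ (k + 1) : ℝ) ^ 2 =
      (k + 1) ^ 2 * x ^ (2 * k) - 2 * (k + 1) * (k + 2) * x ^ (2 * k + 1)
        + (k + 2) ^ 2 * x ^ (2 * k + 2) := fun x => by ring
  have hint : ∀ (C : ℝ) (n : ℕ), IntervalIntegrable (fun x : ℝ => C * x ^ n) volume 0 1 :=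
    fun C n => (continuous_const.mul (continuous_pow n)).intervalIntegrable _ _
  rw [deriv_corrector]
  simp only [hexp]
  rw [intervalIntegral.integral_add ((hint _ _).sub (hint _ _)) (hint _ _),
    intervalIntegral.integral_sub (hint _ _) (hint _ _)]
  simp only [intervalIntegral.integral_const_mul, integral_pow_zero_one]
  calc _ = ((k : ℝ) + 1) / ((2 * k + 1) * (2 * k + 3)) := by
        push_cast
        field_simp
        ring
    _ ≤ 1 / (k + 1) := by
        rw [div_le_div_iff₀ (by positivity) (by positivity)]
        nlinarith

end Corrector

lemma integral_sq_sub_corrector_le {e : ℝ → ℝ} (he : MemLp e 2 (volume.restrict (Ioc 0 1)))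
    (c : ℝ) (k : ℕ) :
    (∫ x in (0 : ℝ)..1, ((∫ t in (0 : ℝ)..x, e t) - c * corrector k x) ^ 2) +
        ∫ x in (0 : ℝ)..1, (e x - c * deriv (corrector k) x) ^ 2 ≤
      4 * (∫ x in (0 : ℝ)..1, e x ^ 2) + 4 * c ^ 2 / (k + 1) := by
  have hE : MemLp (fun x => ∫ t in (0 : ℝ)..x, e t) 2 (volume.restrict (Ioc 0 1)) := by
    refine ContinuousOn.memLp_two_restrict_Ioc zero_le_one ?_
    simpa using intervalIntegral.continuousOn_primitive_interval'
      (he.intervalIntegrable zero_le_one) left_mem_uIcc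
  have hψ : MemLp (fun x => c * corrector k x) 2 (volume.restrict (Ioc 0 1)) :=
    (continuous_const.mul (contDiff_corrector k (n := 0)).continuous).continuousOn
      |>.memLp_two_restrict_Ioc zero_le_one
  have hψ' : MemLp (fun x => c * deriv (corrector k) x) 2 (volume.restrict (Ioc 0 1)) :=
    (continuous_const.mul ((contDiff_corrector k (n := 1)).continuous_deriv le_rfl)).continuousOn
      |>.memLp_two_restrict_Ioc zero_le_one
  have hvalue := integral_sq_sub_le zero_le_one hE hψ
  have hderiv := integral_sq_sub_le zero_le_one he hψ'
  have hpoincare := integral_sq_primitive_le zero_le_one he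
  simp only [mul_pow, intervalIntegral.integral_const_mul] at hvalue hderiv
  have hc := sq_nonneg c
  have h1 := mul_le_mul_of_nonneg_left (integral_corrector_sq_le k) hc
  have h2 := mul_le_mul_of_nonneg_left (integral_deriv_corrector_sq_le k) hc
  rw [mul_one_div] at h1 h2
  norm_num at hpoincare
  rw [mul_div_assoc]
  linarith

theorem density_boundary_condition_set_general (g₁ : ℝ → ℝ)
    (v v' : ℝ → ℝ)
    (hv'int : IntervalIntegrable v' MeasureTheory.volume 0 1)
    (hv'L2 : IntervalIntegrable (fun x => (v' x) ^ 2) MeasureTheory.volume 0 1)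
    (hrep : ∀ x ∈ Set.Icc (0 : ℝ) 1, v x = ∫ t in (0 : ℝ)..x, v' t) :
    ∀ ε > 0, ∃ z : ℝ → ℝ, ContDiff ℝ 2 z ∧ z 0 = 0 ∧ deriv z 1 = -g₁ (z 1) ∧
      (∫ x in (0 : ℝ)..1, (v x - z x) ^ 2) +
        (∫ x in (0 : ℝ)..1, (v' x - deriv z x) ^ 2) < ε := by
  intro ε hε
  have hv' := hv'int.memLp_two_restrict_Ioc zero_le_one hv'L2
  obtain ⟨p, hp⟩ := exists_polynomial_integral_sq_sub_lt zero_le_one hv' (ε := ε / 8)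
    (by positivity)
  set P : ℝ → ℝ := fun x => ∫ t in (0 : ℝ)..x, p.eval t
  set c := p.eval 1 + g₁ (P 1)
  obtain ⟨k, hk⟩ := exists_nat_gt (8 * c ^ 2 / ε)
  have hz' : deriv (fun x => P x + c * corrector k x) =
      fun x => p.eval x + c * deriv (corrector k) x := by
    funext x
    rw [deriv_corrector]
    exact ((p.continuous.integral_hasStrictDerivAt 0 x).hasDerivAt.add
      ((hasDerivAt_corrector k x).const_mul c)).deriv
  have hvz : ∀ x ∈ uIcc (0 : ℝ) 1, (v x - (P x + c * corrector k x)) =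
      (∫ t in (0 : ℝ)..x, (v' t - p.eval t)) - c * corrector k x := fun x hx => by
    rw [hrep x (by simpa using hx), intervalIntegral.integral_sub
      (hv'int.mono_set (uIcc_subset_uIcc left_mem_uIcc hx)) (p.continuous.intervalIntegrable _ _)]
    ring
  have hP : ContDiff ℝ 2 P := contDiff_primitive (n := 1) (p.contDiff_aeval 1) 0
  refine ⟨fun x => P x + c * corrector k x, hP.add (contDiff_const.mul (contDiff_corrector k)),
    by simp [P], by simp [hz', P, c], ?_⟩
  have he := hv'.sub (p.continuous.continuousOn.memLp_two_restrict_Ioc zero_le_one)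
  calc _ = (∫ x in (0 : ℝ)..1,
          ((∫ t in (0 : ℝ)..x, (v' t - p.eval t)) - c * corrector k x) ^ 2) +
        ∫ x in (0 : ℝ)..1, ((v' x - p.eval x) - c * deriv (corrector k) x) ^ 2 := by
        rw [intervalIntegral.integral_congr fun x hx => congrArg (· ^ 2) (hvz x hx), hz']
        simp only [sub_add_eq_sub_sub]
    _ ≤ 4 * (∫ x in (0 : ℝ)..1, (v' x - p.eval x) ^ 2) + 4 * c ^ 2 / (k + 1) :=
        integral_sq_sub_corrector_le he c k
    _ < ε := by
        have hck : 4 * c ^ 2 / (k + 1) < ε / 2 := by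
          rw [div_lt_iff₀ hε] at hk
          rw [div_lt_iff₀ (by positivity)]
          nlinarith
        linarith

/-- Density of `X = {u ∈ H²(0,1) : u(0)=0, u'(1)=−g₁(u(1))}` in
`Y = {u ∈ H¹(0,1) : u(0)=0}` for the `H¹`-norm: any `v ∈ Y` (represented as the
indefinite integral of its weak derivative `v' ∈ L²(0,1)`) can be approximated in the
`H¹`-norm by functions `z` of class `C²` satisfying `z(0)=0` and `z'(1) = −g₁(z(1))`. -/
theorem density_boundary_condition_set (g₁ : ℝ → ℝ) (hg₁ : Continuous g₁) (hg₁0 : g₁ 0 = 0)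
    (v v' : ℝ → ℝ)
    (hv'int : IntervalIntegrable v' MeasureTheory.volume 0 1)
    (hv'L2 : IntervalIntegrable (fun x => (v' x) ^ 2) MeasureTheory.volume 0 1)
    (hrep : ∀ x ∈ Set.Icc (0 : ℝ) 1, v x = ∫ t in (0 : ℝ)..x, v' t) :
    ∀ ε > 0, ∃ z : ℝ → ℝ, ContDiff ℝ 2 z ∧ z 0 = 0 ∧ deriv z 1 = -g₁ (z 1) ∧
      (∫ x in (0 : ℝ)..1, (v x - z x) ^ 2) +
        (∫ x in (0 : ℝ)..1, (v' x - deriv z x) ^ 2) < ε :=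
  density_boundary_condition_set_general g₁ v v' hv'int hv'L2 hrep
end

section
/- Let u, v ∈ H³(0,1) satisfy u(0)=v(0)=0, u'(1)=−g₁(u(1)), v'(1)=−g₁(v(1)), u''(1)=g₂(u(1)), v''(1)=g₂(v(1)), where g₁(k) = (1/ν)(η + (α²/(η(δ+2)²)) k^{2δ}) k and g₂(k) = (δ/ν²)(η + (α²/(η(δ+2)²)) k^{2δ})² k with ν, η, α > 0 and δ ≥ 1 an odd integer. Then ∫₀¹ (u−v)'''(x) (u(x)−v(x)) dx ≥ 0. -/
/-!
Write `w = u - v`. Integrating by parts twice and using `w 0 = 0`,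
`∫₀¹ w''' w = w''(1) w(1) + (w'(0)² - w'(1)²) / 2`, so by the boundary conditions it suffices that
`(g₁ a - g₁ b)² ≤ 2 (a - b) (g₂ a - g₂ b)`. Up to the factors `1/ν` and `δ/ν²`, `g₁` and `g₂` are
polynomials `F` and `G` with `(F')² ≤ G'` pointwise (this needs `δ ≥ 1`), and any such pair satisfies
`(F a - F b)² ≤ (a - b) (G a - G b)`: it is the discriminant condition for the quadratic
`λ ↦ (G - 2λF + λ² t) |_b^a`, which is nonnegative because `G - 2λF + λ² t` has derivative
`G' - 2λF' + λ² ≥ (F' - λ)² ≥ 0`.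
-/

open MeasureTheory Set intervalIntegral

theorem sq_sub_le_mul_sub_of_sq_deriv_le {F G f g : ℝ → ℝ}
    (hF : ∀ t, HasDerivAt F (f t) t) (hG : ∀ t, HasDerivAt G (g t) t)
    (hfg : ∀ t, f t ^ 2 ≤ g t) (a b : ℝ) :
    (F a - F b) ^ 2 ≤ (a - b) * (G a - G b) := by
  wlog hba : b ≤ a generalizing a b
  · linarith [this b a (le_of_not_ge hba)]
  have hquad (l : ℝ) : 0 ≤ (a - b) * (l * l) + (-2 * (F a - F b)) * l + (G a - G b) := by
    have hmono : Monotone fun t => G t - 2 * l * F t + l ^ 2 * t :=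
      monotone_of_hasDerivAt_nonneg (f' := fun t => g t - 2 * l * f t + l ^ 2)
        (fun t => (((hG t).sub ((hF t).const_mul (2 * l))).add
          ((hasDerivAt_id t).const_mul (l ^ 2))).congr_deriv (by simp))
        fun t => show 0 ≤ g t - 2 * l * f t + l ^ 2 by nlinarith [hfg t, sq_nonneg (f t - l)]
    nlinarith [hmono hba]
  have hdisc := discrim_le_zero hquad
  rw [discrim] at hdisc
  linarith

theorem integral_third_deriv_mul_eq {w w' w'' w''' : ℝ → ℝ} {a b : ℝ}
    (h1 : ∀ x ∈ uIcc a b, HasDerivAt w (w' x) x)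
    (h2 : ∀ x ∈ uIcc a b, HasDerivAt w' (w'' x) x)
    (h3 : ∀ x ∈ uIcc a b, HasDerivAt w'' (w''' x) x)
    (hint : IntervalIntegrable w''' volume a b) :
    ∫ x in a..b, w''' x * w x = w'' b * w b - w'' a * w a - (w' b ^ 2 - w' a ^ 2) / 2 := by
  have hw' : IntervalIntegrable w' volume a b :=
    ContinuousOn.intervalIntegrable fun x hx => (h2 x hx).continuousAt.continuousWithinAt
  have hw'' : IntervalIntegrable w'' volume a b :=
    ContinuousOn.intervalIntegrable fun x hx => (h3 x hx).continuousAt.continuousWithinAt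
  have hw'w'' := integral_mul_deriv_eq_deriv_mul h2 h2 hw'' hw''
  have hww''' := integral_mul_deriv_eq_deriv_mul h1 h3 hw' hint
  simp only [mul_comm (w''' _), mul_comm (w'' _) (w' _)] at hww''' hw'w'' ⊢
  rw [hww''']
  linarith

theorem sq_sub_weighted_le {η c : ℝ} (hη : 0 ≤ η) (hc : 0 ≤ c) {δ : ℕ} (hδ : 1 ≤ δ)
    (a b : ℝ) :
    ((η + c * a ^ (2 * δ)) * a - (η + c * b ^ (2 * δ)) * b) ^ 2 ≤
      2 * δ * (a - b) * ((η + c * a ^ (2 * δ)) ^ 2 * a - (η + c * b ^ (2 * δ)) ^ 2 * b) := by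
  have hF (t : ℝ) : HasDerivAt (fun k => η * k + c * k ^ (2 * δ + 1))
      (η + (2 * δ + 1) * (c * t ^ (2 * δ))) t := by
    refine (((hasDerivAt_id t).const_mul η).add
      ((hasDerivAt_pow (2 * δ + 1) t).const_mul c)).congr_deriv ?_
    simp only [Nat.add_sub_cancel]; push_cast; ring
  have hG (t : ℝ) : HasDerivAt
      (fun k => 2 * δ * (η ^ 2 * k + 2 * η * c * k ^ (2 * δ + 1) + c ^ 2 * k ^ (4 * δ + 1)))
      (2 * δ * (η ^ 2 + 2 * (2 * δ + 1) * η * (c * t ^ (2 * δ))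
        + (4 * δ + 1) * (c * t ^ (2 * δ)) ^ 2)) t := by
    refine (((((hasDerivAt_id t).const_mul (η ^ 2)).add
      ((hasDerivAt_pow (2 * δ + 1) t).const_mul (2 * η * c))).add
      ((hasDerivAt_pow (4 * δ + 1) t).const_mul (c ^ 2))).const_mul (2 * (δ : ℝ))).congr_deriv ?_
    simp only [Nat.add_sub_cancel]; push_cast; ring
  have hfg (t : ℝ) : (η + (2 * δ + 1) * (c * t ^ (2 * δ))) ^ 2 ≤
      2 * δ * (η ^ 2 + 2 * (2 * δ + 1) * η * (c * t ^ (2 * δ))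
        + (4 * δ + 1) * (c * t ^ (2 * δ)) ^ 2) := by
    have hs : 0 ≤ c * t ^ (2 * δ) := mul_nonneg hc (by rw [pow_mul]; positivity)
    have hd : (1 : ℝ) ≤ δ := by exact_mod_cast hδ
    nlinarith [mul_nonneg hs hη, mul_nonneg (sub_nonneg.2 hd) (mul_nonneg hs hs),
      mul_nonneg (sub_nonneg.2 hd) (mul_nonneg hs hη), mul_nonneg (sub_nonneg.2 hd) (sq_nonneg η)]
  convert sq_sub_le_mul_sub_of_sq_deriv_le hF hG hfg a b using 1 <;> ring

theorem sq_sub_le_of_flux_feedback {ν η c : ℝ} (hη : 0 ≤ η) (hc : 0 ≤ c)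
    {δ : ℕ} (hδ : 1 ≤ δ) {g₁ g₂ : ℝ → ℝ}
    (hg₁ : ∀ k : ℝ, g₁ k = (1 / ν) * (η + c * k ^ (2 * δ)) * k)
    (hg₂ : ∀ k : ℝ, g₂ k = ((δ : ℝ) / ν ^ 2) * (η + c * k ^ (2 * δ)) ^ 2 * k) (a b : ℝ) :
    (g₁ a - g₁ b) ^ 2 ≤ 2 * (a - b) * (g₂ a - g₂ b) := by
  rw [hg₁, hg₁, hg₂, hg₂]
  refine (le_of_eq ?_).trans
    ((div_le_div_of_nonneg_right (sq_sub_weighted_le hη hc hδ a b) (sq_nonneg ν)).trans_eq ?_)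
    <;> ring

theorem third_order_monotone_general (ν η α : ℝ) (hη : 0 < η)
    (δ : ℕ) (hδ : 1 ≤ δ)
    (g₁ g₂ : ℝ → ℝ)
    (hg₁ : ∀ k : ℝ, g₁ k = (1 / ν) * (η + α ^ 2 / (η * ((δ : ℝ) + 2) ^ 2) * k ^ (2 * δ)) * k)
    (hg₂ : ∀ k : ℝ, g₂ k =
      ((δ : ℝ) / ν ^ 2) * (η + α ^ 2 / (η * ((δ : ℝ) + 2) ^ 2) * k ^ (2 * δ)) ^ 2 * k)
    (u u' u'' u''' v v' v'' v''' : ℝ → ℝ)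
    (hu1 : ∀ x ∈ Set.Icc (0 : ℝ) 1, HasDerivAt u (u' x) x)
    (hu2 : ∀ x ∈ Set.Icc (0 : ℝ) 1, HasDerivAt u' (u'' x) x)
    (hu3 : ∀ x ∈ Set.Icc (0 : ℝ) 1, HasDerivAt u'' (u''' x) x)
    (hv1 : ∀ x ∈ Set.Icc (0 : ℝ) 1, HasDerivAt v (v' x) x)
    (hv2 : ∀ x ∈ Set.Icc (0 : ℝ) 1, HasDerivAt v' (v'' x) x)
    (hv3 : ∀ x ∈ Set.Icc (0 : ℝ) 1, HasDerivAt v'' (v''' x) x)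
    (hu'''int : IntervalIntegrable u''' MeasureTheory.volume 0 1)
    (hv'''int : IntervalIntegrable v''' MeasureTheory.volume 0 1)
    (hu0 : u 0 = 0) (hv0 : v 0 = 0)
    (hub1 : u' 1 = -g₁ (u 1)) (hvb1 : v' 1 = -g₁ (v 1))
    (hub2 : u'' 1 = g₂ (u 1)) (hvb2 : v'' 1 = g₂ (v 1)) :
    (∫ x in (0 : ℝ)..1, (u''' x - v''' x) * (u x - v x)) ≥ 0 := by
  have hI : uIcc (0 : ℝ) 1 = Icc 0 1 := uIcc_of_le zero_le_one
  have hparts := integral_third_deriv_mul_eq (w := fun x => u x - v x)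
    (fun x hx => (hu1 x (hI ▸ hx)).sub (hv1 x (hI ▸ hx)))
    (fun x hx => (hu2 x (hI ▸ hx)).sub (hv2 x (hI ▸ hx)))
    (fun x hx => (hu3 x (hI ▸ hx)).sub (hv3 x (hI ▸ hx))) (hu'''int.sub hv'''int)
  have hflux := sq_sub_le_of_flux_feedback hη.le (by positivity) hδ hg₁ hg₂ (u 1) (v 1)
  rw [hparts, hu0, hv0, hub1, hvb1, hub2, hvb2]
  nlinarith [sq_nonneg (u' 0 - v' 0)]

/-- Monotonicity of the third-order dispersive term under the nonlinear flux feedback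
boundary conditions: `∫₀¹ (u−v)'''(x)(u(x)−v(x)) dx ≥ 0`. -/
theorem third_order_monotone (ν η α : ℝ) (hν : 0 < ν) (hη : 0 < η) (hα : 0 < α)
    (δ : ℕ) (hδ : 1 ≤ δ) (hodd : Odd δ)
    (g₁ g₂ : ℝ → ℝ)
    (hg₁ : ∀ k : ℝ, g₁ k = (1 / ν) * (η + α ^ 2 / (η * ((δ : ℝ) + 2) ^ 2) * k ^ (2 * δ)) * k)
    (hg₂ : ∀ k : ℝ, g₂ k =
      ((δ : ℝ) / ν ^ 2) * (η + α ^ 2 / (η * ((δ : ℝ) + 2) ^ 2) * k ^ (2 * δ)) ^ 2 * k)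
    (u u' u'' u''' v v' v'' v''' : ℝ → ℝ)
    (hu1 : ∀ x ∈ Set.Icc (0 : ℝ) 1, HasDerivAt u (u' x) x)
    (hu2 : ∀ x ∈ Set.Icc (0 : ℝ) 1, HasDerivAt u' (u'' x) x)
    (hu3 : ∀ x ∈ Set.Icc (0 : ℝ) 1, HasDerivAt u'' (u''' x) x)
    (hv1 : ∀ x ∈ Set.Icc (0 : ℝ) 1, HasDerivAt v (v' x) x)
    (hv2 : ∀ x ∈ Set.Icc (0 : ℝ) 1, HasDerivAt v' (v'' x) x)
    (hv3 : ∀ x ∈ Set.Icc (0 : ℝ) 1, HasDerivAt v'' (v''' x) x)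
    (hu'''int : IntervalIntegrable u''' MeasureTheory.volume 0 1)
    (hv'''int : IntervalIntegrable v''' MeasureTheory.volume 0 1)
    (hu0 : u 0 = 0) (hv0 : v 0 = 0)
    (hub1 : u' 1 = -g₁ (u 1)) (hvb1 : v' 1 = -g₁ (v 1))
    (hub2 : u'' 1 = g₂ (u 1)) (hvb2 : v'' 1 = g₂ (v 1)) :
    (∫ x in (0 : ℝ)..1, (u''' x - v''' x) * (u x - v x)) ≥ 0 :=
  third_order_monotone_general ν η α hη δ hδ g₁ g₂ hg₁ hg₂ u u' u'' u''' v v' v'' v''' hu1 hu2 hu3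
    hv1 hv2 hv3 hu'''int hv'''int hu0 hv0 hub1 hvb1 hub2 hvb2
end
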